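/- Let f be continuous on [a,b] and twice differentiable on (a,b) with |f''| ≤ M on (a,b). Define K(t,x) = t - a for t ∈ [a,x) and K(t,x) = t - b for t ∈ [x,b]. Then for every x ∈ [a,b], | f(x) - ((f(b)-f(a))/(b-a)²)·((x-a)²/2 - (x-b)²/2) - (1/(b-a))·∫_a^b f(t) dt | ≤ (M/(b-a)²)·∫_a^b |K(t,x)|·((t-a)²/2 + (t-b)²/2) dt. -/

import Mathlib

/-!
Montgomery's identity `(b - a) f x - ∫ f = ∫ K(t,x) f'(t) dt` (integration by parts on `[a,x]`
and on `[x,b]`), together with `∫ K(t,x) dt = (x-a)²/2 - (x-b)²/2`, turns the left-hand side into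
`(1/(b-a)) |∫ K(t,x) (f'(t) - σ) dt|`, where `σ = (f b - f a)/(b - a)` is the slope of the chord.
Since `(b - a) (f'(t) - σ) = ∫ s in a..b, (f'(t) - f'(s))` and `f'` is `M`-Lipschitz,
`|f'(t) - σ| ≤ M/(b-a) ∫ s in a..b, |t - s| = M/(b-a) ((t-a)²/2 + (t-b)²/2)`.
-/

open Set MeasureTheory intervalIntegral
open scoped NNReal

noncomputable def montgomeryKernel (a b x t : ℝ) : ℝ := if t < x then t - a else t - b

section Kernel

variable {a b x : ℝ}

theorem montgomeryKernel_of_lt {t : ℝ} (h : t < x) : montgomeryKernel a b x t = t - a := if_pos h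

theorem montgomeryKernel_of_le {t : ℝ} (h : x ≤ t) : montgomeryKernel a b x t = t - b :=
  if_neg h.not_gt

theorem montgomeryKernel_eqOn_left (hax : a ≤ x) :
    EqOn (montgomeryKernel a b x) (· - a) (uIoo a x) := fun _ ht =>
  montgomeryKernel_of_lt (by rw [uIoo_of_le hax] at ht; exact ht.2)

theorem montgomeryKernel_eqOn_right (hxb : x ≤ b) :
    EqOn (montgomeryKernel a b x) (· - b) (uIcc x b) := fun _ ht =>
  montgomeryKernel_of_le (by rw [uIcc_of_le hxb] at ht; exact ht.1)

variable {g : ℝ → ℝ} (hx : x ∈ Icc a b) (hg : IntervalIntegrable g volume a b)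
include hx hg

theorem intervalIntegrable_montgomeryKernel_mul :
    IntervalIntegrable (fun t => montgomeryKernel a b x t * g t) volume a b := by
  have hleft : IntervalIntegrable (fun t => (t - a) * g t) volume a x :=
    (hg.mono_set (uIcc_subset_uIcc_left (Icc_subset_uIcc hx))).continuousOn_mul (by fun_prop)
  have hright : IntervalIntegrable (fun t => (t - b) * g t) volume x b :=
    (hg.mono_set (uIcc_subset_uIcc_right (Icc_subset_uIcc hx))).continuousOn_mul (by fun_prop)
  refine (hleft.congr_uIoo fun t ht => ?_).trans (hright.congr fun t ht => ?_)
  · simp [montgomeryKernel_eqOn_left hx.1 ht]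
  · simp [montgomeryKernel_eqOn_right hx.2 (uIoc_subset_uIcc ht)]

theorem integral_montgomeryKernel_mul :
    ∫ t in a..b, montgomeryKernel a b x t * g t
      = (∫ t in a..x, (t - a) * g t) + ∫ t in x..b, (t - b) * g t := by
  have hK := intervalIntegrable_montgomeryKernel_mul hx hg
  rw [← integral_add_adjacent_intervals (b := x)
    (hK.mono_set (uIcc_subset_uIcc_left (Icc_subset_uIcc hx)))
    (hK.mono_set (uIcc_subset_uIcc_right (Icc_subset_uIcc hx)))]
  congr 1
  · exact integral_congr_uIoo fun t ht => by simp [montgomeryKernel_eqOn_left hx.1 ht]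
  · exact integral_congr fun t ht => by simp [montgomeryKernel_eqOn_right hx.2 ht]

omit hg in
theorem integral_montgomeryKernel :
    ∫ t in a..b, montgomeryKernel a b x t = (x - a) ^ 2 / 2 - (x - b) ^ 2 / 2 := by
  have h := integral_montgomeryKernel_mul hx (g := fun _ => 1) intervalIntegrable_const
  simp only [mul_one, integral_comp_sub_right (fun t => t), integral_id] at h
  rw [h]
  ring

end Kernel

theorem integral_abs_sub {a b t : ℝ} (ht : t ∈ Icc a b) :
    ∫ s in a..b, |t - s| = (t - a) ^ 2 / 2 + (t - b) ^ 2 / 2 := by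
  have hcont : Continuous fun s => |t - s| := by fun_prop
  have hleft : ∫ s in a..t, |t - s| = ∫ s in a..t, (t - s) :=
    integral_congr fun s hs => abs_of_nonneg (by rw [uIcc_of_le ht.1] at hs; linarith [hs.2])
  have hright : ∫ s in t..b, |t - s| = ∫ s in t..b, -(t - s) :=
    integral_congr fun s hs => abs_of_nonpos (by rw [uIcc_of_le ht.2] at hs; linarith [hs.1])
  rw [← integral_add_adjacent_intervals (b := t) (hcont.intervalIntegrable _ _)
    (hcont.intervalIntegrable _ _), hleft, hright, intervalIntegral.integral_neg,
    integral_comp_sub_left (fun s => s), integral_comp_sub_left (fun s => s), integral_id,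
    integral_id]
  ring

theorem integral_sub_const_mul_deriv {u v c : ℝ} {f f' : ℝ → ℝ} (huv : u ≤ v)
    (hf : ContinuousOn f (Icc u v)) (hf' : ∀ t ∈ Ioo u v, HasDerivAt f (f' t) t)
    (hint : IntervalIntegrable f' volume u v) :
    ∫ t in u..v, (t - c) * f' t = (v - c) * f v - (u - c) * f u - ∫ t in u..v, f t := by
  have := integral_mul_deriv_eq_deriv_mul_of_hasDerivAt (u := (· - c)) (u' := fun _ => 1)
    (by fun_prop) (by rwa [uIcc_of_le huv]) (fun t _ => (hasDerivAt_id t).sub_const c)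
    (by rwa [min_eq_left huv, max_eq_right huv]) intervalIntegrable_const hint
  simpa using this

theorem integral_montgomeryKernel_mul_deriv {a b x : ℝ} {f f' : ℝ → ℝ} (hx : x ∈ Icc a b)
    (hf : ContinuousOn f (Icc a b)) (hf' : ∀ t ∈ Ioo a b, HasDerivAt f (f' t) t)
    (hint : IntervalIntegrable f' volume a b) :
    ∫ t in a..b, montgomeryKernel a b x t * f' t = (b - a) * f x - ∫ t in a..b, f t := by
  have hfint : IntervalIntegrable f volume a b := hf.intervalIntegrable_of_Icc (hx.1.trans hx.2)
  rw [integral_montgomeryKernel_mul hx hint,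
    integral_sub_const_mul_deriv hx.1 (hf.mono (Icc_subset_Icc_right hx.2))
      (fun t ht => hf' t ⟨ht.1, ht.2.trans_le hx.2⟩)
      (hint.mono_set (uIcc_subset_uIcc_left (Icc_subset_uIcc hx))),
    integral_sub_const_mul_deriv hx.2 (hf.mono (Icc_subset_Icc_left hx.1))
      (fun t ht => hf' t ⟨hx.1.trans_lt ht.1, ht.2⟩)
      (hint.mono_set (uIcc_subset_uIcc_right (Icc_subset_uIcc hx))),
    ← integral_add_adjacent_intervals (b := x)
      (hfint.mono_set (uIcc_subset_uIcc_left (Icc_subset_uIcc hx)))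
      (hfint.mono_set (uIcc_subset_uIcc_right (Icc_subset_uIcc hx)))]
  ring

theorem integral_montgomeryKernel_mul_deriv_sub_const {a b x : ℝ} {f f' : ℝ → ℝ} (c : ℝ)
    (hx : x ∈ Icc a b) (hf : ContinuousOn f (Icc a b))
    (hf' : ∀ t ∈ Ioo a b, HasDerivAt f (f' t) t) (hint : IntervalIntegrable f' volume a b) :
    ∫ t in a..b, montgomeryKernel a b x t * (f' t - c)
      = (b - a) * f x - (∫ t in a..b, f t) - c * ((x - a) ^ 2 / 2 - (x - b) ^ 2 / 2) := by
  simp_rw [mul_sub]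
  rw [integral_sub (intervalIntegrable_montgomeryKernel_mul hx hint)
      (intervalIntegrable_montgomeryKernel_mul hx (intervalIntegrable_const (c := c))),
    intervalIntegral.integral_mul_const, integral_montgomeryKernel_mul_deriv hx hf hf' hint,
    integral_montgomeryKernel hx]
  ring

theorem LipschitzOnWith.intervalIntegrable {f : ℝ → ℝ} {K : ℝ≥0} {a b : ℝ}
    (hf : LipschitzOnWith K f (uIoo a b)) : IntervalIntegrable f volume a b := by
  obtain ⟨g, hg, hfg⟩ := hf.extend_real
  exact (hg.continuous.intervalIntegrable a b).congr_uIoo hfg.symm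

theorem abs_deriv_sub_slope_le {a b t : ℝ} {f f' : ℝ → ℝ} {M : ℝ≥0} (hab : a < b)
    (hf : ContinuousOn f (Icc a b)) (hf' : ∀ t ∈ Ioo a b, HasDerivAt f (f' t) t)
    (hlip : LipschitzOnWith M f' (Ioo a b)) (ht : t ∈ Ioo a b) :
    |f' t - (f b - f a) / (b - a)| ≤ M / (b - a) * ((t - a) ^ 2 / 2 + (t - b) ^ 2 / 2) := by
  have hba : 0 < b - a := sub_pos.2 hab
  have hint : IntervalIntegrable f' volume a b :=
    LipschitzOnWith.intervalIntegrable (by rwa [uIoo_of_le hab.le])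
  have hmean : ∫ s in a..b, (f' t - f' s) = (b - a) * (f' t - (f b - f a) / (b - a)) := by
    rw [integral_sub intervalIntegrable_const hint,
      integral_eq_sub_of_hasDerivAt_of_le hab.le hf hf' hint]
    field_simp
    simp
  have hbound : |∫ s in a..b, (f' t - f' s)| ≤ M * ((t - a) ^ 2 / 2 + (t - b) ^ 2 / 2) :=
    calc |∫ s in a..b, (f' t - f' s)|
        ≤ ∫ s in a..b, |f' t - f' s| := abs_integral_le_integral_abs hab.le
      _ ≤ ∫ s in a..b, M * |t - s| :=
          integral_mono_on_of_le_Ioo hab.le (intervalIntegrable_const.sub hint).abs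
            ((by fun_prop : Continuous fun s => (M : ℝ) * |t - s|).intervalIntegrable a b)
            fun s hs => by simpa [Real.dist_eq] using hlip.dist_le_mul t ht s hs
      _ = M * ((t - a) ^ 2 / 2 + (t - b) ^ 2 / 2) := by
          rw [intervalIntegral.integral_const_mul, integral_abs_sub (Ioo_subset_Icc_self ht)]
  rw [hmean, abs_mul, abs_of_pos hba] at hbound
  rw [div_mul_eq_mul_div, le_div_iff₀ hba]
  linarith

theorem abs_integral_montgomeryKernel_mul_le {a b x : ℝ} {g p : ℝ → ℝ} (hx : x ∈ Icc a b)
    (hg : IntervalIntegrable g volume a b) (hp : Continuous p)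
    (hgp : ∀ t ∈ Ioo a b, |g t| ≤ p t) :
    |∫ t in a..b, montgomeryKernel a b x t * g t|
      ≤ ∫ t in a..b, |montgomeryKernel a b x t| * p t := by
  have hab : a ≤ b := hx.1.trans hx.2
  calc |∫ t in a..b, montgomeryKernel a b x t * g t|
      ≤ ∫ t in a..b, |montgomeryKernel a b x t * g t| := abs_integral_le_integral_abs hab
    _ ≤ ∫ t in a..b, |montgomeryKernel a b x t| * p t := by
        refine integral_mono_on_of_le_Ioo hab (intervalIntegrable_montgomeryKernel_mul hx hg).abs
          ?_ fun t ht => ?_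
        · simpa using ((intervalIntegrable_montgomeryKernel_mul hx
            (intervalIntegrable_const (c := (1 : ℝ)))).abs.mul_continuousOn hp.continuousOn)
        · rw [abs_mul]
          exact mul_le_mul_of_nonneg_left (hgp t ht) (abs_nonneg _)

theorem corDB_real
    (a b : ℝ) (hab : a < b) (f f' f'' : ℝ → ℝ) (M : ℝ)
    (hf : ContinuousOn f (Set.Icc a b))
    (hf' : ∀ t ∈ Set.Ioo a b, HasDerivAt f (f' t) t)
    (hf'' : ∀ t ∈ Set.Ioo a b, HasDerivAt f' (f'' t) t)
    (hM : ∀ t ∈ Set.Ioo a b, |f'' t| ≤ M)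
    (K : ℝ → ℝ → ℝ)
    (hK : ∀ x, ∀ t, K t x = if t < x then t - a else t - b) :
    ∀ x ∈ Set.Icc a b,
      |f x - (f b - f a) / (b - a) ^ 2 * ((x - a) ^ 2 / 2 - (x - b) ^ 2 / 2)
          - (1 / (b - a)) * ∫ t in a..b, f t|
        ≤ M / (b - a) ^ 2
            * ∫ t in a..b, |K t x| * ((t - a) ^ 2 / 2 + (t - b) ^ 2 / 2) := by
  intro x hx
  simp_rw [show ∀ t, K t x = montgomeryKernel a b x t from hK x]
  obtain ⟨m, hm⟩ := nonempty_Ioo.2 hab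
  lift M to ℝ≥0 using (abs_nonneg _).trans (hM m hm)
  have hlip : LipschitzOnWith M f' (Ioo a b) :=
    (convex_Ioo a b).lipschitzOnWith_of_nnnorm_hasDerivWithin_le
      (fun t ht => (hf'' t ht).hasDerivWithinAt)
      fun t ht => by simpa [← NNReal.coe_le_coe] using hM t ht
  have hint : IntervalIntegrable f' volume a b :=
    LipschitzOnWith.intervalIntegrable (by rwa [uIoo_of_le hab.le])
  have hba : 0 < b - a := sub_pos.2 hab
  have hbound := abs_integral_montgomeryKernel_mul_le hx (hint.sub intervalIntegrable_const)
    (by fun_prop) fun t ht => abs_deriv_sub_slope_le hab hf hf' hlip ht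
  simp_rw [integral_montgomeryKernel_mul_deriv_sub_const _ hx hf hf' hint,
    mul_left_comm _ ((M : ℝ) / (b - a)), intervalIntegral.integral_const_mul] at hbound
  have hlhs : f x - (f b - f a) / (b - a) ^ 2 * ((x - a) ^ 2 / 2 - (x - b) ^ 2 / 2)
        - 1 / (b - a) * ∫ t in a..b, f t
      = ((b - a) * f x - (∫ t in a..b, f t)
          - (f b - f a) / (b - a) * ((x - a) ^ 2 / 2 - (x - b) ^ 2 / 2)) / (b - a) := by
    field_simp
    ring
  rw [hlhs, abs_div, abs_of_pos hba, div_le_iff₀ hba]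
  refine hbound.trans_eq ?_
  field_simp
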